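/- Equality V(u) = 2k in the Bogomolny inequality holds if and only if u satisfies u'(x) = k·sin(u(x)) for all x, i.e., u is a translated kink u(x) = 2·arctan(e^{k(x−c)}) for some c ∈ ℝ. -/

import Mathlib

/-!
Completing the square, `u'^2 + k^2 sin^2 u = (u' - k sin u)^2 + 2k sin u · u'`, and the last
term is the derivative of `-2k cos u`, whose integral is `2k (cos 0 - cos π) = 4k`. Hence
`V(u) = 2k` iff the continuous nonnegative function `(u' - k sin u)^2` integrates to zero, i.e.
iff `u' = k sin u`. The kink solves this Lipschitz ODE, and a solution running from `0` to `π`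
never meets the equilibria `0` and `π`, so it stays in `(0, π)` and agrees with a translated kink
at one point, hence everywhere.
-/

open Real MeasureTheory Filter Set

lemma lipschitzWith_const_mul_sin (k : ℝ) : LipschitzWith ‖k‖₊ (fun y => k * sin y) := by
  have h := (lipschitzWith_smul k).comp lipschitzWith_sin
  simp only [smul_eq_mul, mul_one] at h
  exact h

theorem eq_of_hasDerivAt_sine_ode {k t₀ : ℝ} {f g : ℝ → ℝ}
    (hf : ∀ t, HasDerivAt f (k * sin (f t)) t) (hg : ∀ t, HasDerivAt g (k * sin (g t)) t)
    (h : f t₀ = g t₀) : f = g :=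
  ODE_solution_unique_univ (v := fun _ y => k * sin y) (s := fun _ => univ)
    (fun _ => (lipschitzWith_const_mul_sin k).lipschitzOnWith) (fun t => ⟨hf t, trivial⟩)
    (fun t => ⟨hg t, trivial⟩) h

theorem eq_const_of_hasDerivAt_sine_ode {k t₀ : ℝ} {f : ℝ → ℝ}
    (hf : ∀ t, HasDerivAt f (k * sin (f t)) t) (h : sin (f t₀) = 0) : f = fun _ => f t₀ :=
  eq_of_hasDerivAt_sine_ode hf (fun t => by simpa [h] using hasDerivAt_const t (f t₀)) rfl

theorem mem_Ioo_of_hasDerivAt_sine_ode {k : ℝ} {f : ℝ → ℝ}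
    (hf : ∀ t, HasDerivAt f (k * sin (f t)) t)
    (hbot : Tendsto f atBot (nhds 0)) (htop : Tendsto f atTop (nhds π)) (x : ℝ) :
    f x ∈ Ioo 0 π := by
  have hcont : Continuous f := continuous_iff_continuousAt.2 fun t => (hf t).continuousAt
  have not_mem_range {a : ℝ} (ha : sin a = 0) : a ∉ range f := by
    rintro ⟨t₀, rfl⟩
    have hconst := eq_const_of_hasDerivAt_sine_ode hf ha
    rw [hconst] at hbot htop
    exact pi_ne_zero ((tendsto_nhds_unique tendsto_const_nhds htop).symm.trans
      (tendsto_nhds_unique tendsto_const_nhds hbot))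
  constructor
  · by_contra! hx
    obtain ⟨y, hy⟩ := (htop.eventually (eventually_ge_nhds pi_pos)).exists
    exact not_mem_range sin_zero (mem_range_of_exists_le_of_exists_ge hcont ⟨x, hx⟩ ⟨y, hy⟩)
  · by_contra! hx
    obtain ⟨y, hy⟩ := (hbot.eventually (eventually_le_nhds pi_pos)).exists
    exact not_mem_range sin_pi (mem_range_of_exists_le_of_exists_ge hcont ⟨y, hy⟩ ⟨x, hx⟩)

noncomputable def kink (k c x : ℝ) : ℝ := 2 * arctan (exp (k * (x - c)))

lemma sin_two_mul_arctan (s : ℝ) : sin (2 * arctan s) = 2 * s / (1 + s ^ 2) := by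
  have hpos : 0 < 1 + s ^ 2 := by positivity
  rw [sin_two_mul, sin_arctan, cos_arctan]
  field_simp
  rw [sq_sqrt hpos.le]

theorem hasDerivAt_kink (k c x : ℝ) : HasDerivAt (kink k c) (k * sin (kink k c x)) x := by
  have hlin : HasDerivAt (fun x => k * (x - c)) k x := by
    simpa using ((hasDerivAt_id x).sub_const c).const_mul k
  have hexp := (hasDerivAt_exp _).comp x hlin
  refine (((hasDerivAt_arctan _).comp x hexp).const_mul 2).congr_deriv ?_
  rw [kink, sin_two_mul_arctan]
  field_simp
  rfl

theorem exists_eq_kink_of_hasDerivAt_sine_ode {k x₀ : ℝ} (hk : k ≠ 0) {f : ℝ → ℝ}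
    (hf : ∀ t, HasDerivAt f (k * sin (f t)) t) (hx₀ : f x₀ ∈ Ioo 0 π) :
    ∃ c, f = kink k c := by
  obtain ⟨h0, hπ⟩ := hx₀
  have htan : 0 < tan (f x₀ / 2) :=
    tan_pos_of_pos_of_lt_pi_div_two (by linarith [pi_pos]) (by linarith)
  refine ⟨x₀ - log (tan (f x₀ / 2)) / k,
    eq_of_hasDerivAt_sine_ode hf (hasDerivAt_kink k _) (t₀ := x₀) ?_⟩
  have hlog : k * (x₀ - (x₀ - log (tan (f x₀ / 2)) / k)) = log (tan (f x₀ / 2)) := by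
    field_simp; ring
  rw [kink, hlog, exp_log htan, arctan_tan (by linarith [pi_pos]) (by linarith)]
  ring

theorem integrable_mul_of_integrable_sq {α : Type*} [MeasurableSpace α] {μ : Measure α}
    {f g : α → ℝ} (hf : AEStronglyMeasurable f μ) (hg : AEStronglyMeasurable g μ)
    (hf2 : Integrable (fun x => f x ^ 2) μ) (hg2 : Integrable (fun x => g x ^ 2) μ) :
    Integrable (fun x => f x * g x) μ :=
  ((memLp_two_iff_integrable_sq hf).2 hf2).integrable_mul
    ((memLp_two_iff_integrable_sq hg).2 hg2)

theorem integrable_sq_sub_of_integrable_sq {α : Type*} [MeasurableSpace α] {μ : Measure α}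
    {f g : α → ℝ} (hf : AEStronglyMeasurable f μ) (hg : AEStronglyMeasurable g μ)
    (hf2 : Integrable (fun x => f x ^ 2) μ) (hg2 : Integrable (fun x => g x ^ 2) μ) :
    Integrable (fun x => (f x - g x) ^ 2) μ :=
  (memLp_two_iff_integrable_sq (hf.sub hg)).1
    (((memLp_two_iff_integrable_sq hf).2 hf2).sub ((memLp_two_iff_integrable_sq hg).2 hg2))

theorem Continuous.integral_eq_zero_iff_of_nonneg {α : Type*} [TopologicalSpace α]
    [MeasurableSpace α] {μ : Measure α} [μ.IsOpenPosMeasure] {f : α → ℝ} (hcont : Continuous f)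
    (hf : 0 ≤ f) (hfi : Integrable f μ) : ∫ x, f x ∂μ = 0 ↔ f = 0 := by
  rw [MeasureTheory.integral_eq_zero_iff_of_nonneg hf hfi, hcont.ae_eq_iff_eq μ continuous_zero]

theorem integral_sin_comp_mul_deriv {u : ℝ → ℝ} {a b : ℝ} (hu : Differentiable ℝ u)
    (hint : Integrable (fun x => sin (u x) * deriv u x))
    (hbot : Tendsto u atBot (nhds a)) (htop : Tendsto u atTop (nhds b)) :
    ∫ x, sin (u x) * deriv u x = cos a - cos b := by
  have hderiv (x : ℝ) : HasDerivAt (fun y => -cos (u y)) (sin (u x) * deriv u x) x :=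
    ((hasDerivAt_cos (u x)).comp x (hu x).hasDerivAt).neg.congr_deriv (by ring)
  rw [integral_of_hasDerivAt_of_tendsto hderiv hint
    ((continuous_cos.tendsto a).comp hbot).neg ((continuous_cos.tendsto b).comp htop).neg]
  ring

section Bogomolny

variable {k : ℝ} {u : ℝ → ℝ} (hu : ContDiff ℝ 1 u)
  (hI1 : Integrable (fun x => deriv u x ^ 2)) (hI2 : Integrable (fun x => sin (u x) ^ 2))
include hu hI1 hI2

theorem integral_sq_deriv_sub_eq (hbot : Tendsto u atBot (nhds 0))
    (htop : Tendsto u atTop (nhds π)) :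
    ∫ x, (deriv u x - k * sin (u x)) ^ 2 =
      (∫ x, (deriv u x ^ 2 + k ^ 2 * sin (u x) ^ 2)) - 4 * k := by
  have hsin : Continuous fun x => sin (u x) := continuous_sin.comp hu.continuous
  have hderiv : Continuous (deriv u) := hu.continuous_deriv le_rfl
  have hI3 : Integrable fun x => sin (u x) * deriv u x :=
    integrable_mul_of_integrable_sq hsin.aestronglyMeasurable hderiv.aestronglyMeasurable hI2 hI1
  have hexpand : (fun x => (deriv u x - k * sin (u x)) ^ 2) =
      fun x => (deriv u x ^ 2 + k ^ 2 * sin (u x) ^ 2) - 2 * k * (sin (u x) * deriv u x) := by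
    ext x; ring
  have hIV : Integrable fun x => deriv u x ^ 2 + k ^ 2 * sin (u x) ^ 2 := hI1.add (hI2.const_mul _)
  rw [hexpand, integral_sub hIV (hI3.const_mul _), integral_const_mul,
    integral_sin_comp_mul_deriv (hu.differentiable one_ne_zero) hI3 hbot htop]
  norm_num
  ring

theorem energy_eq_iff_deriv_eq (hbot : Tendsto u atBot (nhds 0))
    (htop : Tendsto u atTop (nhds π)) :
    (1 / 2) * (∫ x, (deriv u x ^ 2 + k ^ 2 * sin (u x) ^ 2)) = 2 * k ↔
      ∀ x, deriv u x = k * sin (u x) := by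
  have hsin : Continuous fun x => sin (u x) := continuous_sin.comp hu.continuous
  have hderiv : Continuous (deriv u) := hu.continuous_deriv le_rfl
  have hcont : Continuous fun x => (deriv u x - k * sin (u x)) ^ 2 :=
    (hderiv.sub (hsin.const_mul k)).pow 2
  have hint : Integrable fun x => (deriv u x - k * sin (u x)) ^ 2 :=
    integrable_sq_sub_of_integrable_sq hderiv.aestronglyMeasurable
      (hsin.const_mul k).aestronglyMeasurable hI1 (by simpa [mul_pow] using hI2.const_mul (k ^ 2))
  calc (1 / 2) * (∫ x, (deriv u x ^ 2 + k ^ 2 * sin (u x) ^ 2)) = 2 * k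
        ↔ ∫ x, (deriv u x - k * sin (u x)) ^ 2 = 0 := by
          rw [integral_sq_deriv_sub_eq hu hI1 hI2 hbot htop]
          constructor <;> intro h <;> linarith
    _ ↔ (fun x => (deriv u x - k * sin (u x)) ^ 2) = 0 :=
          hcont.integral_eq_zero_iff_of_nonneg (fun x => sq_nonneg _) hint
    _ ↔ ∀ x, deriv u x = k * sin (u x) := by simp [funext_iff, sub_eq_zero]

end Bogomolny

/-- Equality `V(u) = 2k` in the Bogomolny inequality holds iff
`u' = k·sin(u)` everywhere, i.e. iff `u` is a translated kink
`u(x) = 2·arctan(e^{k(x−c)})` for some `c`. -/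
theorem bogomolny_equality_iff_kink (k : ℝ) (hk : 0 < k) (u : ℝ → ℝ)
    (hu : ContDiff ℝ 1 u)
    (hbot : Tendsto u atBot (nhds 0))
    (htop : Tendsto u atTop (nhds Real.pi))
    (hI1 : Integrable (fun x => (deriv u x) ^ 2))
    (hI2 : Integrable (fun x => (Real.sin (u x)) ^ 2)) :
    ((1 / 2) * (∫ x : ℝ, ((deriv u x) ^ 2 + k ^ 2 * (Real.sin (u x)) ^ 2)) = 2 * k ↔
      ∀ x, deriv u x = k * Real.sin (u x)) ∧
    ((1 / 2) * (∫ x : ℝ, ((deriv u x) ^ 2 + k ^ 2 * (Real.sin (u x)) ^ 2)) = 2 * k ↔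
      ∃ c : ℝ, ∀ x, u x = 2 * Real.arctan (Real.exp (k * (x - c)))) := by
  have hode_iff := energy_eq_iff_deriv_eq (k := k) hu hI1 hI2 hbot htop
  refine ⟨hode_iff, hode_iff.trans ⟨fun hode => ?_, ?_⟩⟩
  · have hf (t : ℝ) : HasDerivAt u (k * sin (u t)) t :=
      hode t ▸ (hu.differentiable one_ne_zero t).hasDerivAt
    obtain ⟨c, rfl⟩ := exists_eq_kink_of_hasDerivAt_sine_ode hk.ne' hf
      (mem_Ioo_of_hasDerivAt_sine_ode hf hbot htop 0)
    exact ⟨c, fun x => rfl⟩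
  · rintro ⟨c, hc⟩ x
    rw [show u = kink k c from funext hc]
    exact (hasDerivAt_kink k c x).deriv
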